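/- arXiv:2509.26170 — 2 statements merged into one kernel-verified Lean document; each statement's English description precedes it below -/
import Mathlib

section
/- Let Γ = Cay(Z₈, {±1,±2}) and let n ≥ 6 be even. The automorphism τ of Γ × Cₙ given by (u,i)^τ = (5u+4i, i) does not belong to Aut(Γ) × Aut(Cₙ); hence the pair (Γ, Cₙ) is unstable. -/
/-!
For even `n`, the parity of `i.val` flips along every edge of `Cₙ`, so `4 * i.val` (in `Z₈`)
changes by exactly `4` across each edge. Hence `τ(u,i)` and `τ(v,j)` are adjacent iff `i ~ j` and
`5(u - v) + 4 ∈ {±1, ±2}`, and this connection set is invariant under `w ↦ 5w + 4`.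
On the other hand `τ` fixes `(0,0)` but sends `(0,1)` to `(4,1)`: its first coordinate depends
on the second.
-/

/-- The automorphism group of a graph given by an adjacency relation `A`. -/
def autSubgroup {X : Type*} (A : X → X → Prop) : Subgroup (Equiv.Perm X) where
  carrier := {σ | ∀ x y, A x y ↔ A (σ x) (σ y)}
  one_mem' := fun _ _ => Iff.rfl
  mul_mem' := by
    intro a b ha hb x y
    simpa [Equiv.Perm.mul_apply] using (hb x y).trans (ha (b x) (b y))
  inv_mem' := by
    intro a ha x y
    have h := ha (a⁻¹ x) (a⁻¹ y)
    simpa using h.symm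

/-- The group of two-fold automorphisms (TF-automorphisms) of a graph with
adjacency relation `A`: pairs `(α, β)` of permutations such that
`(s, t)` is an arc iff `(α s, β t)` is an arc. -/
def tfaSubgroup {X : Type*} (A : X → X → Prop) :
    Subgroup (Equiv.Perm X × Equiv.Perm X) where
  carrier := {p | ∀ x y, A x y ↔ A (p.1 x) (p.2 y)}
  one_mem' := fun _ _ => Iff.rfl
  mul_mem' := by
    intro a b ha hb x y
    simpa [Equiv.Perm.mul_apply] using (hb x y).trans (ha (b.1 x) (b.2 y))
  inv_mem' := by
    intro a ha x y
    have h := ha (a.1⁻¹ x) (a.2⁻¹ y)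
    simpa using h.symm

/-- Adjacency of the direct (tensor) product of two graphs. -/
def prodAdj {X Y : Type*} (A : X → X → Prop) (B : Y → Y → Prop) :
    X × Y → X × Y → Prop := fun p q => A p.1 q.1 ∧ B p.2 q.2

/-- Adjacency of the complete graph `K₂` on `Bool`. -/
def k2Adj : Bool → Bool → Prop := fun i j => i ≠ j

/-- Adjacency of the cycle `Cₙ` on `ZMod n`. -/
def cycAdj (n : ℕ) : ZMod n → ZMod n → Prop := fun i j => i = j + 1 ∨ j = i + 1

/-- Adjacency of the Cayley graph `Cay(Z₈, {±1, ±2})`. -/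
def cayAdj : ZMod 8 → ZMod 8 → Prop := fun u v => u - v ∈ ({1, -1, 2, -2} : Set (ZMod 8))

theorem ZMod.val_one_of_even {n : ℕ} (hn : Even n) : (1 : ZMod n).val = 1 :=
  ZMod.val_one'' <| by rintro rfl; exact Nat.not_even_one hn

theorem ZMod.even_val_add {n : ℕ} (hn : Even n) (a b : ZMod n) :
    Even (a + b).val ↔ (Even a.val ↔ Even b.val) := by
  rcases n.eq_zero_or_pos with rfl | hpos
  · -- `ZMod 0 = ℤ`, where `val` is `Int.natAbs`.
    exact Int.natAbs_even.trans <|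
      Int.even_add.trans (iff_congr Int.natAbs_even Int.natAbs_even).symm
  · have : NeZero n := ⟨hpos.ne'⟩
    rw [ZMod.val_add, ← Nat.even_add, Nat.even_iff, Nat.even_iff,
      Nat.mod_mod_of_dvd _ hn.two_dvd]

theorem cycAdj.even_val_iff_not {n : ℕ} (hn : Even n) {i j : ZMod n} (h : cycAdj n i j) :
    Even i.val ↔ ¬Even j.val := by
  have hodd : ¬Even (1 : ZMod n).val := by
    rw [ZMod.val_one_of_even hn]
    exact Nat.not_even_one
  rcases h with rfl | rfl <;> rw [ZMod.even_val_add hn] <;> tauto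

theorem four_mul_natCast_sub_of_even_iff_not {k l : ℕ} (h : Even k ↔ ¬Even l) :
    (4 : ZMod 8) * k - 4 * l = 4 := by
  have h8 : (8 : ZMod 8) = 0 := rfl
  rcases Nat.even_or_odd k with ⟨a, rfl⟩ | ⟨a, rfl⟩
  · obtain ⟨b, rfl⟩ := Nat.not_even_iff_odd.mp (h.mp ⟨a, rfl⟩)
    push_cast
    linear_combination (a - b - 1) * h8
  · obtain ⟨b, rfl⟩ := not_not.mp (mt h.mpr (Nat.not_even_iff_odd.mpr ⟨a, rfl⟩))
    push_cast
    linear_combination (a - b) * h8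

theorem cayAdj_five_mul_add_iff {u v a b : ZMod 8} (h : a - b = 4) :
    cayAdj (5 * u + a) (5 * v + b) ↔ cayAdj u v := by
  unfold cayAdj
  rw [show 5 * u + a - (5 * v + b) = 5 * (u - v) + 4 by linear_combination h]
  generalize u - v = w
  simp only [Set.mem_insert_iff, Set.mem_singleton_iff]
  revert w
  decide

theorem prodAdj_twist_iff {n : ℕ} (hn : Even n) (u v : ZMod 8) (i j : ZMod n) :
    prodAdj cayAdj (cycAdj n) (5 * u + 4 * (i.val : ZMod 8), i)
        (5 * v + 4 * (j.val : ZMod 8), j) ↔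
      prodAdj cayAdj (cycAdj n) (u, i) (v, j) :=
  and_congr_left fun hij =>
    cayAdj_five_mul_add_iff (four_mul_natCast_sub_of_even_iff_not (hij.even_val_iff_not hn))

theorem not_exists_prodMap_of_fst_ne {X Y : Type*} {τ : X × Y → X × Y} {x : X} {y y' : Y}
    (h : (τ (x, y)).1 ≠ (τ (x, y')).1) :
    ¬∃ (σ : X → X) (ρ : Y → Y), ∀ p, τ p = Prod.map σ ρ p := by
  rintro ⟨σ, ρ, hσρ⟩
  exact h (by rw [hσρ, hσρ]; rfl)

theorem stmt_12_general (n : ℕ) (hev : Even n)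
    (τ : Equiv.Perm (ZMod 8 × ZMod n))
    (hτ : ∀ (u : ZMod 8) (i : ZMod n), τ (u, i) = (5 * u + 4 * (i.val : ZMod 8), i)) :
    τ ∈ autSubgroup (prodAdj cayAdj (cycAdj n)) ∧
    (¬∃ (σ : Equiv.Perm (ZMod 8)) (ρ : Equiv.Perm (ZMod n)),
        σ ∈ autSubgroup cayAdj ∧ ρ ∈ autSubgroup (cycAdj n) ∧
        ∀ x : ZMod 8 × ZMod n, τ x = (σ x.1, ρ x.2)) ∧
    (∃ τ' ∈ autSubgroup (prodAdj cayAdj (cycAdj n)),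
      ¬∃ (σ : Equiv.Perm (ZMod 8)) (ρ : Equiv.Perm (ZMod n)),
        σ ∈ autSubgroup cayAdj ∧ ρ ∈ autSubgroup (cycAdj n) ∧
        ∀ x : ZMod 8 × ZMod n, τ' x = (σ x.1, ρ x.2)) := by
  have hτ_aut : τ ∈ autSubgroup (prodAdj cayAdj (cycAdj n)) := by
    rintro ⟨u, i⟩ ⟨v, j⟩
    rw [hτ, hτ, prodAdj_twist_iff hev]
  have hτ_not_prod : ¬∃ (σ : Equiv.Perm (ZMod 8)) (ρ : Equiv.Perm (ZMod n)),
      σ ∈ autSubgroup cayAdj ∧ ρ ∈ autSubgroup (cycAdj n) ∧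
      ∀ x : ZMod 8 × ZMod n, τ x = (σ x.1, ρ x.2) := by
    rintro ⟨σ, ρ, -, -, hσρ⟩
    refine not_exists_prodMap_of_fst_ne (x := 0) (y := 0) (y' := 1) ?_ ⟨σ, ρ, hσρ⟩
    simp only [hτ, ZMod.val_zero, ZMod.val_one_of_even hev]
    decide
  exact ⟨hτ_aut, hτ_not_prod, τ, hτ_aut, hτ_not_prod⟩

/-- Let `Γ = Cay(Z₈, {±1,±2})` and let `n ≥ 6` be even. The automorphism
`τ : (u, i) ↦ (5u + 4i, i)` of `Γ × Cₙ` does not belong to `Aut(Γ) × Aut(Cₙ)`; hence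
the pair `(Γ, Cₙ)` is unstable. -/
theorem stmt_12 (n : ℕ) (hn : 6 ≤ n) (hev : Even n)
    (τ : Equiv.Perm (ZMod 8 × ZMod n))
    (hτ : ∀ (u : ZMod 8) (i : ZMod n), τ (u, i) = (5 * u + 4 * (i.val : ZMod 8), i)) :
    τ ∈ autSubgroup (prodAdj cayAdj (cycAdj n)) ∧
    (¬∃ (σ : Equiv.Perm (ZMod 8)) (ρ : Equiv.Perm (ZMod n)),
        σ ∈ autSubgroup cayAdj ∧ ρ ∈ autSubgroup (cycAdj n) ∧
        ∀ x : ZMod 8 × ZMod n, τ x = (σ x.1, ρ x.2)) ∧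
    (∃ τ' ∈ autSubgroup (prodAdj cayAdj (cycAdj n)),
      ¬∃ (σ : Equiv.Perm (ZMod 8)) (ρ : Equiv.Perm (ZMod n)),
        σ ∈ autSubgroup cayAdj ∧ ρ ∈ autSubgroup (cycAdj n) ∧
        ∀ x : ZMod 8 × ZMod n, τ' x = (σ x.1, ρ x.2)) :=
  stmt_12_general n hev τ hτ
end

section
/- Let Γ be a connected non-bipartite graph admitting a non-diagonal TF-automorphism (α,β), and let Σ be a connected bipartite graph with bipartition {U,W}. Define, for each vertex v of Σ, α_v = α if v ∈ U and α_v = β if v ∈ W. Then the map (s,v) ↦ (s^{α_v}, v) is an automorphism of Γ × Σ that is not in Aut(Γ) × Aut(Σ). In particular, if Γ is unstable then the pair (Γ,Σ) is unstable. -/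
/-!
Over a bipartite `Σ` every arc of `Γ × Σ` runs from the `U`-layer to the `W`-layer (or back), so
acting by `α` on the `U`-layer and by `β` on the `W`-layer preserves arcs exactly because `(α, β)`
is a TF-automorphism (and `(β, α)` is one too, `Γ` being undirected). If this map were of the form
`σ × ρ`, then comparing the first coordinates over a vertex of `U` and a vertex of `W` would give
`α = σ = β`.
-/

theorem swap_mem_tfaSubgroup {X : Type*} {A : X → X → Prop} (hA : Symmetric A)
    {α β : Equiv.Perm X} (h : (α, β) ∈ tfaSubgroup A) : (β, α) ∈ tfaSubgroup A :=
  fun x y => ⟨fun hxy => hA ((h y x).mp (hA hxy)), fun hxy => hA ((h y x).mpr (hA hxy))⟩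

theorem prodCongrLeft_mem_autSubgroup_prodAdj {X Y : Type*} {A : X → X → Prop}
    {B : Y → Y → Prop} (e : Y → Equiv.Perm X)
    (he : ∀ u w, B u w → (e u, e w) ∈ tfaSubgroup A) :
    Equiv.prodCongrLeft e ∈ autSubgroup (prodAdj A B) := by
  rintro ⟨s, u⟩ ⟨t, w⟩
  simp only [Equiv.prodCongrLeft_apply, prodAdj]
  exact and_congr_left fun huw => he u w huw s t

theorem eq_of_prodCongrLeft_eq_prodCongr {X Y : Type*} {e : Y → Equiv.Perm X}
    {σ : Equiv.Perm X} {ρ : Equiv.Perm Y}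
    (h : ∀ x : X × Y, Equiv.prodCongrLeft e x = (σ x.1, ρ x.2)) (y : Y) : e y = σ :=
  Equiv.ext fun s => congrArg Prod.fst (h (s, y))

theorem stmt_13_general {VG VS : Type*}
    (AdjG : VG → VG → Prop) (hsG : Symmetric AdjG)
    (α β : Equiv.Perm VG) (hTF : (α, β) ∈ tfaSubgroup AdjG) (hne : α ≠ β)
    (AdjS : VS → VS → Prop)
    (U W : Set VS) [DecidablePred (· ∈ U)]
    (hdisj : Disjoint U W)
    (hU : U.Nonempty) (hW : W.Nonempty)
    (hbip : ∀ u v, AdjS u v → (u ∈ U ∧ v ∈ W) ∨ (u ∈ W ∧ v ∈ U)) :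
    ∃ τ : Equiv.Perm (VG × VS),
      (∀ (s : VG) (v : VS), τ (s, v) = (if v ∈ U then α s else β s, v)) ∧
      τ ∈ autSubgroup (prodAdj AdjG AdjS) ∧
      ¬∃ (σ : Equiv.Perm VG) (ρ : Equiv.Perm VS),
        σ ∈ autSubgroup AdjG ∧ ρ ∈ autSubgroup AdjS ∧
        ∀ x : VG × VS, τ x = (σ x.1, ρ x.2) := by
  set e : VS → Equiv.Perm VG := fun v => if v ∈ U then α else β
  have he_U : ∀ {v}, v ∈ U → e v = α := fun hv => if_pos hv
  have he_W : ∀ {v}, v ∈ W → e v = β := fun hv => if_neg (hdisj.notMem_of_mem_right hv)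
  refine ⟨Equiv.prodCongrLeft e, fun s v => by
    simp only [Equiv.prodCongrLeft_apply, e]; split_ifs <;> rfl,
    prodCongrLeft_mem_autSubgroup_prodAdj e fun u w huw => ?_, ?_⟩
  · rcases hbip u w huw with ⟨hu, hw⟩ | ⟨hu, hw⟩
    · rwa [he_U hu, he_W hw]
    · rw [he_W hu, he_U hw]
      exact swap_mem_tfaSubgroup hsG hTF
  · rintro ⟨σ, ρ, -, -, hτ⟩
    obtain ⟨u, hu⟩ := hU
    obtain ⟨w, hw⟩ := hW
    exact hne (by rw [← he_U hu, ← he_W hw, eq_of_prodCongrLeft_eq_prodCongr hτ u,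
      eq_of_prodCongrLeft_eq_prodCongr hτ w])

/-- Let `Γ` be connected non-bipartite with a non-diagonal
TF-automorphism `(α, β)`, and `Σ` connected bipartite with bipartition `{U, W}`.
Then `(s, v) ↦ (α s, v)` for `v ∈ U` and `(s, v) ↦ (β s, v)` for `v ∈ W` is an
automorphism of `Γ × Σ` not in `Aut(Γ) × Aut(Σ)`. -/
theorem stmt_13 {VG VS : Type*} [Fintype VG] [Fintype VS]
    (AdjG : VG → VG → Prop) (hsG : Symmetric AdjG)
    (hconnG : ∀ u v : VG, Relation.ReflTransGen AdjG u v)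
    (hnbG : ¬∃ c : VG → Bool, ∀ u v, AdjG u v → c u ≠ c v)
    (α β : Equiv.Perm VG) (hTF : (α, β) ∈ tfaSubgroup AdjG) (hne : α ≠ β)
    (AdjS : VS → VS → Prop) (hsS : Symmetric AdjS)
    (hconnS : ∀ u v : VS, Relation.ReflTransGen AdjS u v)
    (U W : Set VS) [DecidablePred (· ∈ U)]
    (hdisj : Disjoint U W) (hcover : U ∪ W = Set.univ)
    (hU : U.Nonempty) (hW : W.Nonempty)
    (hbip : ∀ u v, AdjS u v → (u ∈ U ∧ v ∈ W) ∨ (u ∈ W ∧ v ∈ U)) :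
    ∃ τ : Equiv.Perm (VG × VS),
      (∀ (s : VG) (v : VS), τ (s, v) = (if v ∈ U then α s else β s, v)) ∧
      τ ∈ autSubgroup (prodAdj AdjG AdjS) ∧
      ¬∃ (σ : Equiv.Perm VG) (ρ : Equiv.Perm VS),
        σ ∈ autSubgroup AdjG ∧ ρ ∈ autSubgroup AdjS ∧
        ∀ x : VG × VS, τ x = (σ x.1, ρ x.2) :=
  stmt_13_general AdjG hsG α β hTF hne AdjS U W hdisj hU hW hbip
end
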